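/- There exists D₀ such that for all D ≥ D₀ and any multiset of m ≤ D degrees D₁,…,D_m, each ≥ D, one has (ln D − 2 ln ln D)/(2D) ≤ ∏_{i=1}^m (1 − (ln D_i − 2 ln ln D_i)/(2 D_i)). -/

import Mathlib

open Real Finset

/-- `log y ≤ 2 √y` for nonnegative `y`. -/
lemma log_le_two_sqrt {y : ℝ} (hy : 0 ≤ y) : Real.log y ≤ 2 * Real.sqrt y := by
  rcases eq_or_lt_of_le hy with h | h
  · simp [← h]
  · have hs : 0 < Real.sqrt y := Real.sqrt_pos.mpr h
    have h2 := Real.log_le_sub_one_of_pos hs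
    have hls : Real.log (Real.sqrt y) = Real.log y / 2 := Real.log_sqrt hy
    rw [hls] at h2
    linarith

/-- For `0 ≤ t < 1`, `exp (-(t/(1-t))) ≤ 1 - t`. -/
lemma exp_neg_div_le {t : ℝ} (h0 : 0 ≤ t) (h1 : t < 1) :
    Real.exp (-(t / (1 - t))) ≤ 1 - t := by
  have h1t : 0 < 1 - t := by linarith
  have hinv : 0 < (1 - t)⁻¹ := inv_pos.mpr h1t
  have hlog := Real.log_le_sub_one_of_pos hinv
  rw [Real.log_inv] at hlog
  have hsub : (1 - t)⁻¹ - 1 = t / (1 - t) := by field_simp; ring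
  rw [hsub] at hlog
  have hle : -(t / (1 - t)) ≤ Real.log (1 - t) := by linarith
  calc Real.exp (-(t / (1 - t))) ≤ Real.exp (Real.log (1 - t)) := Real.exp_le_exp.mpr hle
    _ = 1 - t := Real.exp_log h1t

/-- For `x` with `exp 16 ≤ x`, the numerator `log x - 2 log (log x)` is nonnegative. -/
lemma numer_nonneg {x : ℝ} (hx : Real.exp 16 ≤ x) :
    0 ≤ Real.log x - 2 * Real.log (Real.log x) := by
  have hx0 : (0:ℝ) < x := lt_of_lt_of_le (Real.exp_pos 16) hx
  have hL : 16 ≤ Real.log x := by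
    have := Real.log_le_log (Real.exp_pos 16) hx
    rwa [Real.log_exp] at this
  have hL0 : (0:ℝ) ≤ Real.log x := by linarith
  have h1 : Real.log (Real.log x) ≤ 2 * Real.sqrt (Real.log x) := log_le_two_sqrt hL0
  have hs : Real.sqrt (Real.log x) ^ 2 = Real.log x := Real.sq_sqrt hL0
  have hs4 : 4 ≤ Real.sqrt (Real.log x) := by
    rw [Real.le_sqrt (by norm_num) hL0]; nlinarith
  nlinarith [Real.sqrt_nonneg (Real.log x)]

set_option maxHeartbeats 1600000 in
theorem local_shearer_condition :
    ∃ D₀ : ℝ, ∀ D : ℝ, D₀ ≤ D → ∀ m : ℕ, (m : ℝ) ≤ D → ∀ Ds : Fin m → ℝ,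
      (∀ i, D ≤ Ds i) →
      (Real.log D - 2 * Real.log (Real.log D)) / (2 * D)
        ≤ ∏ i, (1 - (Real.log (Ds i) - 2 * Real.log (Real.log (Ds i))) / (2 * Ds i)) := by
  refine ⟨Real.exp 16, fun D hD m hm Ds hDs => ?_⟩
  have hD0 : (0:ℝ) < D := lt_of_lt_of_le (Real.exp_pos 16) hD
  have hLD : 16 ≤ Real.log D := by
    have := Real.log_le_log (Real.exp_pos 16) hD
    rwa [Real.log_exp] at this
  have hLD0 : (0:ℝ) < Real.log D := by linarith
  -- D ≥ 625 hence √D ≥ 16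
  have hexp4 : (5:ℝ) ≤ Real.exp 4 := by linarith [Real.add_one_le_exp (4:ℝ)]
  have hD625 : (625:ℝ) ≤ D := by
    have h16 : Real.exp 16 = Real.exp 4 * Real.exp 4 * Real.exp 4 * Real.exp 4 := by
      rw [← Real.exp_add, ← Real.exp_add, ← Real.exp_add]; norm_num
    have h25 : (25:ℝ) ≤ Real.exp 4 * Real.exp 4 := by nlinarith [Real.exp_pos (4:ℝ)]
    have h625 : (625:ℝ) ≤ Real.exp 4 * Real.exp 4 * Real.exp 4 * Real.exp 4 := by
      nlinarith [Real.exp_pos (4:ℝ)]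
    linarith [h16 ▸ h625]
  set s : ℝ := Real.sqrt D with hs_def
  have hs_sq : s ^ 2 = D := Real.sq_sqrt hD0.le
  have hs_pos : 0 < s := Real.sqrt_pos.mpr hD0
  have hs16 : 16 ≤ s := by
    rw [hs_def, Real.le_sqrt (by norm_num) hD0.le]; nlinarith
  -- log D ≤ √D  and  (log D)^2 ≤ 16 √D
  have hlogs : Real.log s = Real.log D / 2 := Real.log_sqrt hD0.le
  have hlog_le : Real.log D ≤ 4 * Real.sqrt s := by
    have h1 : Real.log s ≤ 2 * Real.sqrt s := log_le_two_sqrt hs_pos.le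
    rw [hlogs] at h1; linarith
  have hss_sq : Real.sqrt s ^ 2 = s := Real.sq_sqrt hs_pos.le
  have hss4 : 4 ≤ Real.sqrt s := by
    rw [Real.le_sqrt (by norm_num) hs_pos.le]; nlinarith
  have hlog_le_s : Real.log D ≤ s := by nlinarith
  have hlogsq : Real.log D ^ 2 ≤ 16 * s := by nlinarith
  -- A := log D / (2 D)
  set A : ℝ := Real.log D / (2 * D) with hA_def
  have hA_pos : 0 < A := div_pos hLD0 (by linarith)
  have hA_le : A ≤ 1 / (2 * s) := by
    rw [hA_def, div_le_div_iff₀ (by linarith) (by linarith)]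
    nlinarith
  have hA_half : A ≤ 1 / 32 := le_trans hA_le (by
    rw [div_le_div_iff₀ (by linarith) (by norm_num)]; linarith)
  have hA_lt1 : A < 1 := by linarith
  -- per-index bounds
  set a : Fin m → ℝ := fun i => (Real.log (Ds i) - 2 * Real.log (Real.log (Ds i))) / (2 * Ds i)
    with ha_def
  have hDs_big : ∀ i, Real.exp 16 ≤ Ds i := fun i => le_trans hD (hDs i)
  have hDs_pos : ∀ i, (0:ℝ) < Ds i := fun i => lt_of_lt_of_le (Real.exp_pos 16) (hDs_big i)
  have ha_nonneg : ∀ i, 0 ≤ a i := fun i =>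
    div_nonneg (numer_nonneg (hDs_big i)) (by linarith [hDs_pos i])
  have ha_le_A : ∀ i, a i ≤ A := by
    intro i
    have hloglog : 0 ≤ Real.log (Real.log (Ds i)) := by
      have h16i : 16 ≤ Real.log (Ds i) := by
        have := Real.log_le_log (Real.exp_pos 16) (hDs_big i)
        rwa [Real.log_exp] at this
      exact Real.log_nonneg (by linarith)
    have hDsi := hDs_pos i
    have h1 : a i ≤ Real.log (Ds i) / (2 * Ds i) := by
      show (Real.log (Ds i) - 2 * Real.log (Real.log (Ds i))) / (2 * Ds i) ≤ _
      gcongr <;> linarith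
    have he1 : Real.exp 1 ≤ D := le_trans (Real.exp_le_exp.mpr (by norm_num)) hD
    have h2 : Real.log (Ds i) / Ds i ≤ Real.log D / D :=
      Real.log_div_self_antitoneOn (Set.mem_setOf_eq ▸ he1)
        (Set.mem_setOf_eq ▸ le_trans he1 (hDs i)) (hDs i)
    have h3 : Real.log (Ds i) / (2 * Ds i) = (Real.log (Ds i) / Ds i) / 2 := by
      rw [div_div, mul_comm]
    have h4 : A = (Real.log D / D) / 2 := by rw [hA_def, div_div, mul_comm]
    rw [h4]; rw [h3] at h1
    linarith
  have ha_lt1 : ∀ i, a i < 1 := fun i => lt_of_le_of_lt (ha_le_A i) hA_lt1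
  -- product bound via exp
  set t : Fin m → ℝ := fun i => a i / (1 - a i) with ht_def
  have ht_le : ∀ i, t i ≤ A / (1 - A) := by
    intro i
    have h1 : 0 < 1 - A := by linarith
    have h2 : 0 < 1 - a i := by linarith [ha_lt1 i]
    show a i / (1 - a i) ≤ A / (1 - A)
    exact div_le_div₀ hA_pos.le (ha_le_A i) h1 (by linarith [ha_le_A i])
  have hprod : Real.exp (-∑ i, t i) ≤ ∏ i, (1 - a i) := by
    calc Real.exp (-∑ i, t i) = ∏ i, Real.exp (-(t i)) := by
          rw [← Real.exp_sum]; congr 1; rw [Finset.sum_neg_distrib]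
      _ ≤ ∏ i, (1 - a i) := by
          apply Finset.prod_le_prod (fun i _ => (Real.exp_pos _).le)
          intro i _
          exact exp_neg_div_le (ha_nonneg i) (ha_lt1 i)
  -- sum bound
  have hsum : ∑ i, t i ≤ D * (A / (1 - A)) := by
    calc ∑ i, t i ≤ ∑ _i : Fin m, A / (1 - A) :=
          Finset.sum_le_sum (fun i _ => ht_le i)
      _ = (m : ℝ) * (A / (1 - A)) := by
          simp [Finset.sum_const, Finset.card_univ, nsmul_eq_mul]
      _ ≤ D * (A / (1 - A)) := by
          apply mul_le_mul_of_nonneg_right hm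
          exact div_nonneg hA_pos.le (by linarith)
  -- now the key: S := D * A / (1-A) = (log D / 2) / (1 - A) = log D / 2 + δ
  have h1A : (0:ℝ) < 1 - A := by linarith
  have hDA0 : D * A = Real.log D / 2 := by
    rw [hA_def]; field_simp
  have hDA : D * (A / (1 - A)) = Real.log D / 2 + (Real.log D / 2) * (A / (1 - A)) := by
    have hne : (1 - A) ≠ 0 := ne_of_gt h1A
    calc D * (A / (1 - A)) = (D * A) * (1 / (1 - A)) := by ring
      _ = (Real.log D / 2) * (1 / (1 - A)) := by rw [hDA0]
      _ = Real.log D / 2 + (Real.log D / 2) * (A / (1 - A)) := by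
          field_simp; ring
  set δ : ℝ := (Real.log D / 2) * (A / (1 - A)) with hδ_def
  have hδ_nonneg : 0 ≤ δ := by
    apply mul_nonneg (by linarith)
    exact div_nonneg hA_pos.le h1A.le
  have hδ_half : δ ≤ 1 / 2 := by
    have h1 : A / (1 - A) ≤ 2 * A := by
      rw [div_le_iff₀ h1A]; nlinarith [hA_pos, hA_half]
    have h2 : δ ≤ Real.log D * A := by
      have hh := mul_le_mul_of_nonneg_left h1 (by linarith : (0:ℝ) ≤ Real.log D / 2)
      have heq : (Real.log D / 2) * (2 * A) = Real.log D * A := by ring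
      rw [hδ_def]; linarith
    have h3 : Real.log D * A ≤ Real.log D * (1 / (2 * s)) :=
      mul_le_mul_of_nonneg_left hA_le hLD0.le
    have h4 : Real.log D * (1 / (2 * s)) ≤ 1 / 2 := by
      rw [mul_one_div, div_le_div_iff₀ (by linarith) (by norm_num)]
      linarith
    linarith
  -- exp(-(log D/2)) = 1/s
  have hexp_half : Real.exp (-(Real.log D / 2)) = 1 / s := by
    rw [← hlogs, Real.exp_neg, Real.exp_log hs_pos, one_div]
  -- LHS ≤ A ≤ (1/(2s)) ≤ (1/s)*(1-δ) ≤ (1/s)*exp(-δ) = exp(-(logD/2 + δ))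
  have hLHS_le_A : (Real.log D - 2 * Real.log (Real.log D)) / (2 * D) ≤ A := by
    rw [hA_def]
    have hll := Real.log_nonneg (x := Real.log D) (by linarith)
    gcongr <;> linarith
  have key : A ≤ Real.exp (-(Real.log D / 2 + δ)) := by
    have h1 : Real.exp (-(Real.log D / 2 + δ)) = (1 / s) * Real.exp (-δ) := by
      rw [neg_add, Real.exp_add, hexp_half]
    have h2 : 1 - δ ≤ Real.exp (-δ) := by linarith [Real.add_one_le_exp (-δ)]
    have h3 : (1 / s) * (1 - δ) ≤ (1 / s) * Real.exp (-δ) := by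
      apply mul_le_mul_of_nonneg_left h2 (by positivity)
    have h4 : A ≤ (1 / s) * (1 - δ) := by
      have h5 : (1 / s) * (1 / 2) ≤ (1 / s) * (1 - δ) := by
        apply mul_le_mul_of_nonneg_left (by linarith)
        positivity
      have h6 : (1 / s) * (1 / 2 : ℝ) = 1 / (2 * s) := by ring
      linarith [hA_le, h6 ▸ h5]
    rw [h1]; linarith
  -- assemble
  have hfinal : (Real.log D - 2 * Real.log (Real.log D)) / (2 * D)
      ≤ Real.exp (-∑ i, t i) := by
    have h1 : Real.exp (-(D * (A / (1 - A)))) ≤ Real.exp (-∑ i, t i) :=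
      Real.exp_le_exp.mpr (by linarith)
    have h2 : Real.exp (-(D * (A / (1 - A)))) = Real.exp (-(Real.log D / 2 + δ)) := by
      rw [hDA]
    linarith [hLHS_le_A, key, h2 ▸ h1]
  calc (Real.log D - 2 * Real.log (Real.log D)) / (2 * D)
      ≤ Real.exp (-∑ i, t i) := hfinal
    _ ≤ ∏ i, (1 - a i) := hprod
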